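/- Let U, V, Z be finite sets, let P_{UV} and Q_{UV} be probability mass functions on U × V such that P_{UV}(u,v) = 0 whenever Q_{UV}(u,v) = 0, with marginals P_U, P_V, Q_V, and let Γ₀, Γ₁ be probability mass functions on Z. Define K := sup over probability mass functions π_z on Z of [ D(π_z ‖ Γ₀) − (3/2)·D(π_z ‖ Γ₁) ], define the set 𝒫̄_U := { π_U pmf on U : D(π_U ‖ P_U) ≥ K }, define T_U(u) := Σ_v P_V(v) Q_{U|V}(u|v) where Q_{U|V}(u|v) = Q_{UV}(u,v)/Q_V(v). If T_U ∉ 𝒫̄_U, then the infimum of D(π_{UV} ‖ Q_{UV}) over all probability mass functions π_{UV} on U × V with V-marginal equal to P_V and U-marginal not in 𝒫̄_U equals D(P_V ‖ Q_V). -/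

import Mathlib

/-!
Marginalising can only decrease the divergence (log-sum inequality), so every admissible `π_{UV}`,
having `V`-marginal `P_V`, satisfies `D(π_{UV}‖Q_{UV}) ≥ D(P_V‖Q_V)`. Equality is attained by
`π*_{UV} = P_V Q_{U|V}`: its likelihood ratio against `Q_{UV}` is `P_V / Q_V`, and its `U`-marginal
is `T_U`, which is admissible by hypothesis.
-/

open scoped BigOperators

/-- `P` is a probability mass function on the finite set `Z`. -/
def IsPmf {Z : Type*} [Fintype Z] (P : Z → ℝ) : Prop :=
  (∀ z, 0 ≤ P z) ∧ ∑ z, P z = 1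

/-- Kullback–Leibler divergence (natural log, terms with `P z = 0` contribute `0`);
only meaningful when `P` is absolutely continuous w.r.t. `Q`. -/
noncomputable def klDiv {Z : Type*} [Fintype Z] (P Q : Z → ℝ) : ℝ :=
  ∑ z, if 0 < P z then P z * Real.log (P z / Q z) else 0

/-- Extended-real Kullback–Leibler divergence: equals `+∞` if `P` is not absolutely
continuous with respect to `Q`. -/
noncomputable def klDivE {Z : Type*} [Fintype Z] (P Q : Z → ℝ) : EReal :=
  if ∀ z, Q z = 0 → P z = 0 then ((klDiv P Q : ℝ) : EReal) else ⊤

/-- `K := sup` over pmfs `π` on `Z` of `D(π‖Γ₀) - (3/2)·D(π‖Γ₁)`, in the extended reals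
(in `EReal`, terms with `D(π‖Γ₁) = +∞` equal `-∞`, as in the convention). -/
noncomputable def Ksup {Z : Type*} [Fintype Z] (Γ0 Γ1 : Z → ℝ) : EReal :=
  ⨆ π : {p : Z → ℝ // IsPmf p},
    klDivE (π : Z → ℝ) Γ0 - ((3 / 2 : ℝ) : EReal) * klDivE (π : Z → ℝ) Γ1

lemma klDiv_eq_sum_mul_log {Z : Type*} [Fintype Z] {P : Z → ℝ} (hP : ∀ z, 0 ≤ P z)
    (Q : Z → ℝ) : klDiv P Q = ∑ z, P z * Real.log (P z / Q z) := by
  refine Finset.sum_congr rfl fun z _ => ?_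
  rcases (hP z).eq_or_lt with h | h
  · simp [← h]
  · exact if_pos h

lemma klDivE_of_absCont {Z : Type*} [Fintype Z] {P Q : Z → ℝ} (h : ∀ z, Q z = 0 → P z = 0) :
    klDivE P Q = (klDiv P Q : EReal) :=
  if_pos h

lemma mul_log_add_sub_mul_le_mul_log_div {a b c : ℝ} (ha : 0 ≤ a) (hb : 0 ≤ b)
    (hab : b = 0 → a = 0) (hc : 0 < c) : a * Real.log c + (a - b * c) ≤ a * Real.log (a / b) := by
  rcases ha.eq_or_lt with rfl | ha
  · simp only [zero_mul, zero_sub, zero_add, neg_nonpos]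
    positivity
  have hb : 0 < b := hb.lt_of_ne fun h => ha.ne' (hab h.symm)
  have hlog := Real.one_sub_inv_le_log_of_pos (by positivity : 0 < a / (b * c))
  rw [← div_div, Real.log_div (by positivity) hc.ne', inv_div] at hlog
  have hbc : a * (c / (a / b)) = b * c := by field_simp
  nlinarith [mul_le_mul_of_nonneg_left hlog ha.le]

/-- The log-sum inequality. -/
lemma sum_mul_log_sum_div_sum_le {ι : Type*} [Fintype ι] {a b : ι → ℝ} (ha : ∀ i, 0 ≤ a i)
    (hb : ∀ i, 0 ≤ b i) (hab : ∀ i, b i = 0 → a i = 0) :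
    (∑ i, a i) * Real.log ((∑ i, a i) / ∑ i, b i) ≤ ∑ i, a i * Real.log (a i / b i) := by
  rcases (Finset.sum_nonneg fun i _ => ha i).eq_or_lt with hSa | hSa
  · have ha0 := (Fintype.sum_eq_zero_iff_of_nonneg ha).1 hSa.symm
    simp [ha0]
  have hSb : 0 < ∑ i, b i := by
    refine (Finset.sum_nonneg fun i _ => hb i).lt_of_ne fun h => hSa.ne' ?_
    have hb0 := (Fintype.sum_eq_zero_iff_of_nonneg hb).1 h.symm
    exact Finset.sum_eq_zero fun i _ => hab i (congrFun hb0 i)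
  calc (∑ i, a i) * Real.log ((∑ i, a i) / ∑ i, b i)
      = ∑ i, (a i * Real.log ((∑ i, a i) / ∑ i, b i)
          + (a i - b i * ((∑ i, a i) / ∑ i, b i))) := by
        rw [Finset.sum_add_distrib, Finset.sum_sub_distrib, ← Finset.sum_mul, ← Finset.sum_mul,
          mul_div_cancel₀ _ hSb.ne']
        ring
    _ ≤ ∑ i, a i * Real.log (a i / b i) := Finset.sum_le_sum fun i _ =>
        mul_log_add_sub_mul_le_mul_log_div (ha i) (hb i) (hab i) (div_pos hSa hSb)

section Marginal

variable {U V : Type*} [Fintype U] {P Q : U × V → ℝ}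

lemma sum_eq_zero_of_absCont (hQ : ∀ p, 0 ≤ Q p) (habs : ∀ p, Q p = 0 → P p = 0) {v : V}
    (hv : ∑ u, Q (u, v) = 0) : ∑ u, P (u, v) = 0 :=
  Finset.sum_eq_zero fun u _ =>
    habs _ ((Finset.sum_eq_zero_iff_of_nonneg fun u _ => hQ (u, v)).1 hv u (Finset.mem_univ u))

/-- `P_V(v) Q_{U|V}(u|v)`. -/
noncomputable def marginalCompCond (P Q : U × V → ℝ) : U × V → ℝ :=
  fun p => (∑ u, P (u, p.2)) * (Q p / ∑ u, Q (u, p.2))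

lemma marginalCompCond_nonneg (hP : ∀ p, 0 ≤ P p) (hQ : ∀ p, 0 ≤ Q p) (p : U × V) :
    0 ≤ marginalCompCond P Q p :=
  mul_nonneg (Finset.sum_nonneg fun _ _ => hP _)
    (div_nonneg (hQ p) (Finset.sum_nonneg fun _ _ => hQ _))

lemma marginalCompCond_eq_zero {p : U × V} (hp : Q p = 0) : marginalCompCond P Q p = 0 := by
  simp [marginalCompCond, hp]

lemma sum_marginalCompCond (hQ : ∀ p, 0 ≤ Q p) (habs : ∀ p, Q p = 0 → P p = 0) (v : V) :
    ∑ u, marginalCompCond P Q (u, v) = ∑ u, P (u, v) := by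
  simp only [marginalCompCond, ← Finset.mul_sum, ← Finset.sum_div]
  by_cases hv : ∑ u, Q (u, v) = 0
  · rw [sum_eq_zero_of_absCont hQ habs hv, zero_mul]
  · rw [div_self hv, mul_one]

variable [Fintype V]

lemma klDiv_marginal_le (hP : ∀ p, 0 ≤ P p) (hQ : ∀ p, 0 ≤ Q p)
    (habs : ∀ p, Q p = 0 → P p = 0) :
    klDiv (fun v => ∑ u, P (u, v)) (fun v => ∑ u, Q (u, v)) ≤ klDiv P Q := by
  rw [klDiv_eq_sum_mul_log (fun v => Finset.sum_nonneg fun u _ => hP (u, v)),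
    klDiv_eq_sum_mul_log hP, Fintype.sum_prod_type_right]
  exact Finset.sum_le_sum fun v _ =>
    sum_mul_log_sum_div_sum_le (fun u => hP (u, v)) (fun u => hQ (u, v)) (fun u => habs (u, v))

lemma klDivE_marginal_le (hP : ∀ p, 0 ≤ P p) (hQ : ∀ p, 0 ≤ Q p) :
    klDivE (fun v => ∑ u, P (u, v)) (fun v => ∑ u, Q (u, v)) ≤ klDivE P Q := by
  by_cases habs : ∀ p, Q p = 0 → P p = 0
  · rw [klDivE_of_absCont habs, klDivE_of_absCont fun v => sum_eq_zero_of_absCont hQ habs]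
    exact EReal.coe_le_coe_iff.2 (klDiv_marginal_le hP hQ habs)
  · exact le_top.trans_eq (if_neg habs).symm

lemma isPmf_marginalCompCond (hP : IsPmf P) (hQ : ∀ p, 0 ≤ Q p)
    (habs : ∀ p, Q p = 0 → P p = 0) : IsPmf (marginalCompCond P Q) := by
  refine ⟨marginalCompCond_nonneg hP.1 hQ, ?_⟩
  simp only [Fintype.sum_prod_type_right, sum_marginalCompCond hQ habs]
  rw [← Fintype.sum_prod_type_right, hP.2]

lemma klDiv_marginalCompCond (hP : ∀ p, 0 ≤ P p) (hQ : ∀ p, 0 ≤ Q p)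
    (habs : ∀ p, Q p = 0 → P p = 0) :
    klDiv (marginalCompCond P Q) Q = klDiv (fun v => ∑ u, P (u, v)) (fun v => ∑ u, Q (u, v)) := by
  have hratio : ∀ p, marginalCompCond P Q p * Real.log (marginalCompCond P Q p / Q p)
      = marginalCompCond P Q p * Real.log ((∑ u, P (u, p.2)) / ∑ u, Q (u, p.2)) := by
    intro p
    by_cases hp : marginalCompCond P Q p = 0
    · simp [hp]
    have hQp : Q p ≠ 0 := fun h => hp (marginalCompCond_eq_zero h)
    have hQV : ∑ u, Q (u, p.2) ≠ 0 := fun h => hp (by simp [marginalCompCond, h])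
    simp only [marginalCompCond]
    field_simp
  rw [klDiv_eq_sum_mul_log (marginalCompCond_nonneg hP hQ),
    klDiv_eq_sum_mul_log fun v => Finset.sum_nonneg fun u _ => hP (u, v),
    Fintype.sum_prod_type_right]
  refine Finset.sum_congr rfl fun v _ => ?_
  simp only [hratio, ← Finset.sum_mul, sum_marginalCompCond hQ habs]

end Marginal

theorem sInf_klDiv_eq_of_TU_not_mem_Pbar_general {U V Z : Type*}
    [Fintype U] [Fintype V] [Fintype Z]
    (P Q : U × V → ℝ) (hP : IsPmf P) (hQ : IsPmf Q)
    (habs : ∀ p, Q p = 0 → P p = 0)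
    (Γ0 Γ1 : Z → ℝ)
    (hTU : ¬ Ksup Γ0 Γ1 ≤
        klDivE (fun u => ∑ v, (∑ u', P (u', v)) * (Q (u, v) / ∑ u', Q (u', v)))
          (fun u => ∑ v, P (u, v))) :
    sInf {d : EReal | ∃ π : U × V → ℝ, IsPmf π ∧
          (∀ v, ∑ u, π (u, v) = ∑ u, P (u, v)) ∧
          ¬ Ksup Γ0 Γ1 ≤ klDivE (fun u => ∑ v, π (u, v)) (fun u => ∑ v, P (u, v)) ∧
          d = klDivE π Q}
      = klDivE (fun v => ∑ u, P (u, v)) (fun v => ∑ u, Q (u, v)) := by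
  apply le_antisymm
  · refine sInf_le ⟨marginalCompCond P Q, isPmf_marginalCompCond hP hQ.1 habs,
      sum_marginalCompCond hQ.1 habs, hTU, ?_⟩
    rw [klDivE_of_absCont fun p => marginalCompCond_eq_zero,
      klDivE_of_absCont fun v => sum_eq_zero_of_absCont hQ.1 habs,
      klDiv_marginalCompCond hP.1 hQ.1 habs]
  · refine le_sInf ?_
    rintro _ ⟨π, hπ, hmarg, -, rfl⟩
    simpa only [hmarg] using klDivE_marginal_le hπ.1 hQ.1

theorem sInf_klDiv_eq_of_TU_not_mem_Pbar {U V Z : Type*}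
    [Fintype U] [Fintype V] [Fintype Z]
    (P Q : U × V → ℝ) (hP : IsPmf P) (hQ : IsPmf Q)
    (habs : ∀ p, Q p = 0 → P p = 0)
    (Γ0 Γ1 : Z → ℝ) (hΓ0 : IsPmf Γ0) (hΓ1 : IsPmf Γ1)
    (hTU : ¬ Ksup Γ0 Γ1 ≤
        klDivE (fun u => ∑ v, (∑ u', P (u', v)) * (Q (u, v) / ∑ u', Q (u', v)))
          (fun u => ∑ v, P (u, v))) :
    sInf {d : EReal | ∃ π : U × V → ℝ, IsPmf π ∧
          (∀ v, ∑ u, π (u, v) = ∑ u, P (u, v)) ∧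
          ¬ Ksup Γ0 Γ1 ≤ klDivE (fun u => ∑ v, π (u, v)) (fun u => ∑ v, P (u, v)) ∧
          d = klDivE π Q}
      = klDivE (fun v => ∑ u, P (u, v)) (fun v => ∑ u, Q (u, v)) :=
  sInf_klDiv_eq_of_TU_not_mem_Pbar_general P Q hP hQ habs Γ0 Γ1 hTU
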